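/- arXiv:1610.01058 — 5 statements merged into one kernel-verified Lean document; each statement's English description precedes it below -/
import Mathlib

section
/- Let X_1, ..., X_n be independent random variables each taking values in [0,1], let X = X_1 + ... + X_n and Y = min(X, 1). Then E[Y] ≥ (1 - 1/e) · min(E[X], 1). -/
/-!
Pointwise, `min (∑ i, X i) 1 ≥ 1 - ∏ i, (1 - X i)`. By independence the right-hand side has mean
`1 - ∏ i, (1 - E[X i]) ≥ 1 - exp (-E[X])`, and the concave function `t ↦ 1 - exp (-t)` lies above
its chord `(1 - 1/e) t` on `[0, 1]`.
-/

open MeasureTheory ProbabilityTheory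

theorem Finset.one_sub_sum_le_prod_one_sub {ι : Type*} (s : Finset ι) {x : ι → ℝ}
    (h0 : ∀ i ∈ s, 0 ≤ x i) (h1 : ∀ i ∈ s, x i ≤ 1) :
    1 - ∑ i ∈ s, x i ≤ ∏ i ∈ s, (1 - x i) := by
  induction s using Finset.cons_induction with
  | empty => simp
  | cons a s _ ih =>
    simp only [Finset.mem_cons, forall_eq_or_imp] at h0 h1
    rw [Finset.sum_cons, Finset.prod_cons]
    have hsum : 0 ≤ ∑ i ∈ s, x i := Finset.sum_nonneg h0.2
    calc 1 - (x a + ∑ i ∈ s, x i)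
        ≤ (1 - x a) * (1 - ∑ i ∈ s, x i) := by nlinarith [h0.1]
      _ ≤ (1 - x a) * ∏ i ∈ s, (1 - x i) := by
        gcongr
        · linarith [h1.1]
        · exact ih h0.2 h1.2

theorem Real.prod_one_sub_le_exp_neg_sum {ι : Type*} (s : Finset ι) {x : ι → ℝ}
    (h1 : ∀ i ∈ s, x i ≤ 1) : ∏ i ∈ s, (1 - x i) ≤ Real.exp (-∑ i ∈ s, x i) := by
  rw [← Finset.sum_neg_distrib, Real.exp_sum]
  exact Finset.prod_le_prod (fun i hi => sub_nonneg.2 (h1 i hi))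
    fun i _ => Real.one_sub_le_exp_neg (x i)

theorem Real.one_sub_exp_neg_one_mul_min_le {t : ℝ} (ht : 0 ≤ t) :
    (1 - Real.exp (-1)) * min t 1 ≤ 1 - Real.exp (-t) := by
  rcases le_total 1 t with h | h
  · rw [min_eq_right h, mul_one]
    gcongr
  · rw [min_eq_left h]
    have hconv := convexOn_exp.2 (Set.mem_univ 0) (Set.mem_univ (-1)) (sub_nonneg.2 h) ht
      (sub_add_cancel 1 t)
    simp only [smul_eq_mul, mul_zero, zero_add, Real.exp_zero, mul_one, mul_neg_one] at hconv
    linarith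

theorem one_sub_prod_one_sub_le_min_sum_one {ι : Type*} (s : Finset ι) {x : ι → ℝ}
    (h0 : ∀ i ∈ s, 0 ≤ x i) (h1 : ∀ i ∈ s, x i ≤ 1) :
    1 - ∏ i ∈ s, (1 - x i) ≤ min (∑ i ∈ s, x i) 1 := by
  refine le_min ?_ ?_
  · linarith [s.one_sub_sum_le_prod_one_sub h0 h1]
  · linarith [Finset.prod_nonneg fun i hi => sub_nonneg.2 (h1 i hi)]

namespace ProbabilityTheory.iIndepFun

variable {Ω ι : Type*} [MeasurableSpace Ω] {μ : Measure Ω} [IsProbabilityMeasure μ] [Fintype ι]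
  {X : ι → Ω → ℝ}

theorem integral_prod_one_sub (hX : iIndepFun X μ) (hint : ∀ i, Integrable (X i) μ) :
    ∫ ω, ∏ i, (1 - X i ω) ∂μ = ∏ i, (1 - ∫ ω, X i ω ∂μ) := by
  rw [hX.integral_fun_prod_comp (f := fun _ x => 1 - x) (fun i => (hint i).aemeasurable)
    fun _ => (measurable_const.sub measurable_id).aestronglyMeasurable]
  refine Finset.prod_congr rfl fun i _ => ?_
  rw [integral_sub (integrable_const 1) (hint i), integral_const, probReal_univ, one_smul]

theorem one_sub_prod_one_sub_integral_le_integral_min_sum_one (hX : iIndepFun X μ)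
    (hm : ∀ i, AEMeasurable (X i) μ) (hb : ∀ i, ∀ᵐ ω ∂μ, X i ω ∈ Set.Icc (0 : ℝ) 1) :
    1 - ∏ i, (1 - ∫ ω, X i ω ∂μ) ≤ ∫ ω, min (∑ i, X i ω) 1 ∂μ := by
  have hb' : ∀ᵐ ω ∂μ, ∀ i, X i ω ∈ Set.Icc (0 : ℝ) 1 := ae_all_iff.2 hb
  have hpoint : ∀ᵐ ω ∂μ, 1 - ∏ i, (1 - X i ω) ≤ min (∑ i, X i ω) 1 := hb'.mono fun ω hω =>
    one_sub_prod_one_sub_le_min_sum_one _ (fun i _ => (hω i).1) fun i _ => (hω i).2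
  have hint : ∀ i, Integrable (X i) μ := fun i => .of_mem_Icc 0 1 (hm i) (hb i)
  have hint_prod : Integrable (fun ω => ∏ i, (1 - X i ω)) μ := by
    refine .of_mem_Icc 0 1 (by fun_prop) (hb'.mono fun ω hω => ⟨?_, ?_⟩)
    · exact Finset.prod_nonneg fun i _ => sub_nonneg.2 (hω i).2
    · exact Finset.prod_le_one (fun i _ => sub_nonneg.2 (hω i).2)
        fun i _ => sub_le_self _ (hω i).1
  have hint_min : Integrable (fun ω => min (∑ i, X i ω) 1) μ := by
    refine .of_mem_Icc 0 1 (by fun_prop) (hb'.mono fun ω hω => ⟨?_, min_le_right _ _⟩)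
    exact le_min (Finset.sum_nonneg fun i _ => (hω i).1) zero_le_one
  calc 1 - ∏ i, (1 - ∫ ω, X i ω ∂μ) = ∫ ω, (1 - ∏ i, (1 - X i ω)) ∂μ := by
        rw [integral_sub (integrable_const 1) hint_prod, hX.integral_prod_one_sub hint,
          integral_const, probReal_univ, one_smul]
    _ ≤ ∫ ω, min (∑ i, X i ω) 1 ∂μ :=
        integral_mono_ae ((integrable_const 1).sub hint_prod) hint_min hpoint

end ProbabilityTheory.iIndepFun

/-- Aggarwal et al.: for independent [0,1]-valued random variables X_i with sum X
and Y = min(X,1), we have E[Y] ≥ (1 - 1/e) · min(E[X], 1). -/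
theorem stmt0 {Ω : Type*} [MeasureSpace Ω] [IsProbabilityMeasure (ℙ : Measure Ω)]
    {n : ℕ} (X : Fin n → Ω → ℝ)
    (hmeas : ∀ i, Measurable (X i))
    (hindep : iIndepFun X ℙ)
    (hbound : ∀ i, ∀ᵐ ω ∂ℙ, X i ω ∈ Set.Icc (0 : ℝ) 1) :
    (1 - 1 / Real.exp 1) * min (∫ ω, (∑ i, X i ω) ∂ℙ) 1
      ≤ ∫ ω, min (∑ i, X i ω) 1 ∂ℙ := by
  have hint i : Integrable (X i) ℙ := .of_mem_Icc 0 1 (hmeas i).aemeasurable (hbound i)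
  have hmean_nonneg i : 0 ≤ ∫ ω, X i ω ∂ℙ :=
    integral_nonneg_of_ae ((hbound i).mono fun _ h => h.1)
  have hmean_le_one i : ∫ ω, X i ω ∂ℙ ≤ 1 := by
    simpa using integral_mono_ae (hint i) (integrable_const 1) ((hbound i).mono fun _ h => h.2)
  rw [integral_finsetSum _ fun i _ => hint i, one_div, ← Real.exp_neg]
  calc _ ≤ 1 - Real.exp (-∑ i, ∫ ω, X i ω ∂ℙ) :=
        Real.one_sub_exp_neg_one_mul_min_le (Finset.sum_nonneg fun i _ => hmean_nonneg i)
    _ ≤ 1 - ∏ i, (1 - ∫ ω, X i ω ∂ℙ) := by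
        gcongr
        exact Real.prod_one_sub_le_exp_neg_sum _ fun i _ => hmean_le_one i
    _ ≤ ∫ ω, min (∑ i, X i ω) 1 ∂ℙ :=
        hindep.one_sub_prod_one_sub_integral_le_integral_min_sum_one
          (fun i => (hmeas i).aemeasurable) hbound
end

section
/- Let C : Γ × [n] → ℝ≥0 be a nonnegative cost matrix with Γ a finite nonempty set and [n] = {1,...,n}. Then max over probability distributions p on [n] of (min_{I∈Γ} Σ_T p(T)·C(I,T)) / (Σ_T p(T)·T) equals min over probability distributions π on Γ of max_{T∈[n]} (Σ_I π(I)·C(I,T)) / T. -/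
/-!
Weak duality is averaging: the minimum over rows is at most the `π`-average, and each column
average `∑ I, π I * C I T` is at most `(T + 1)` times the maximal ratio. For the converse let `V`
be the left-hand side. Every mixed strategy `q` then meets a row on which the shifted matrix
`C I T - V * (T + 1)` has nonpositive `q`-average, i.e. the image of the simplex under this matrix
misses the open positive orthant. A Hahn–Banach functional separating the two has nonnegative
coefficients, and normalised they form a `π` whose ratios are all at most `V`.
-/

open Set

section
variable {ι κ : Type*} [Fintype ι] [Fintype κ]

theorem exists_nonneg_ne_zero_forall_sum_mul_nonpos [Nonempty κ] (A : ι → κ → ℝ)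
    (hA : ∀ q ∈ stdSimplex ℝ κ, ∃ i, ∑ j, q j * A i j ≤ 0) :
    ∃ y : ι → ℝ, (∀ i, 0 ≤ y i) ∧ y ≠ 0 ∧ ∀ j, ∑ i, y i * A i j ≤ 0 := by
  classical
  set U : Set (ι → ℝ) := univ.pi fun _ => Ioi 0
  set K : Set (ι → ℝ) := (Matrix.of A).mulVecLin '' stdSimplex ℝ κ
  have hK : ∀ q, (Matrix.of A).mulVecLin q = fun i => ∑ j, q j * A i j := fun q => by
    ext i; simp [Matrix.mulVec, dotProduct, mul_comm]
  have hUK : Disjoint U K := by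
    rw [Set.disjoint_right]
    rintro _ ⟨q, hq, rfl⟩ hU
    obtain ⟨i, hi⟩ := hA q hq
    have := hU i (mem_univ i)
    rw [hK] at this
    exact (not_lt.2 hi) this
  obtain ⟨f, u, hfU, hfK⟩ := geometric_hahn_banach_open
    (convex_pi fun _ _ => convex_Ioi 0) (isOpen_set_pi finite_univ fun _ _ => isOpen_Ioi)
    ((convex_stdSimplex ℝ κ).linear_image _) hUK
  have hf_le : ∀ x, (∀ i, 0 ≤ x i) → f x ≤ u := by
    have : closure U ⊆ {x | f x ≤ u} :=
      closure_minimal (fun x hx => (hfU x hx).le) (isClosed_le f.continuous continuous_const)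
    intro x hx
    apply this
    rw [closure_pi_set]
    exact fun i _ => by simpa using hx i
  have hu : 0 ≤ u := by simpa using hf_le 0 fun _ => le_rfl
  -- the closed orthant is a cone, so `f ≤ u` on it forces `f ≤ 0`
  have hf_nonpos : ∀ x, (∀ i, 0 ≤ x i) → f x ≤ 0 := by
    intro x hx
    by_contra! h
    have := hf_le (((u + 1) / f x) • x) fun i =>
      smul_nonneg (div_nonneg (by linarith) h.le) (hx i)
    rw [map_smul, smul_eq_mul, div_mul_cancel₀ _ h.ne'] at this
    linarith
  set y : ι → ℝ := fun i => -f (fun j => if i = j then 1 else 0)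
  have hf : ∀ x, f x = -∑ i, y i * x i := fun x => by
    simpa [y, mul_comm] using f.toLinearMap.pi_apply_eq_sum_univ x
  refine ⟨y, fun i => neg_nonneg.2 (hf_nonpos _ fun j => ?_), ?_, fun j => ?_⟩
  · split_ifs <;> norm_num
  · intro hy
    obtain j := Classical.arbitrary κ
    have h1 := hfU (fun _ => 1) (by simp)
    have h2 := hfK _ ⟨_, ite_eq_mem_stdSimplex ℝ j, rfl⟩
    simp only [hf, hy, Pi.zero_apply, zero_mul, Finset.sum_const_zero, neg_zero] at h1 h2
    linarith
  · have := hfK _ ⟨_, ite_eq_mem_stdSimplex ℝ j, rfl⟩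
    simp only [hK, ite_mul, one_mul, zero_mul, Finset.sum_ite_eq, Finset.mem_univ, ↓reduceIte,
      hf] at this
    linarith

theorem inv_sum_smul_mem_stdSimplex {y : ι → ℝ} (hy : ∀ i, 0 ≤ y i) (hy0 : y ≠ 0) :
    (∑ i, y i)⁻¹ • y ∈ stdSimplex ℝ ι := by
  have hσ : 0 < ∑ i, y i := Fintype.sum_pos (lt_of_le_of_ne hy (Ne.symm hy0))
  refine ⟨fun i => smul_nonneg (inv_nonneg.2 hσ.le) (hy i), ?_⟩
  simp [← Finset.mul_sum, hσ.ne']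

theorem exists_mem_stdSimplex_forall_sum_mul_nonpos [Nonempty κ] (A : ι → κ → ℝ)
    (hA : ∀ q ∈ stdSimplex ℝ κ, ∃ i, ∑ j, q j * A i j ≤ 0) :
    ∃ π ∈ stdSimplex ℝ ι, ∀ j, ∑ i, π i * A i j ≤ 0 := by
  obtain ⟨y, hy, hy0, hyA⟩ := exists_nonneg_ne_zero_forall_sum_mul_nonpos A hA
  refine ⟨(∑ i, y i)⁻¹ • y, inv_sum_smul_mem_stdSimplex hy hy0, fun j => ?_⟩
  simp only [Pi.smul_apply, smul_eq_mul, mul_assoc, ← Finset.mul_sum]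
  exact mul_nonpos_of_nonneg_of_nonpos (inv_nonneg.2 (Finset.sum_nonneg fun i _ => hy i))
    (hyA j)

theorem ciInf_le_sum_mul_of_mem_stdSimplex {π : ι → ℝ} (hπ : π ∈ stdSimplex ℝ ι) (f : ι → ℝ) :
    ⨅ i, f i ≤ ∑ i, π i * f i :=
  calc ⨅ i, f i = ∑ i, π i * ⨅ i, f i := by rw [← Finset.sum_mul, hπ.2, one_mul]
    _ ≤ ∑ i, π i * f i := Finset.sum_le_sum fun i _ =>
      mul_le_mul_of_nonneg_left (ciInf_le (Finite.bddBelow_range f) i) (hπ.1 i)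

theorem sum_mul_pos_of_mem_stdSimplex {p c : ι → ℝ} (hp : p ∈ stdSimplex ℝ ι)
    (hc : ∀ i, 0 < c i) : 0 < ∑ i, p i * c i := by
  obtain ⟨i, -, hi⟩ :=
    Finset.exists_lt_of_sum_lt (f := 0) (g := p) (s := Finset.univ) (by simp [hp.2])
  exact Finset.sum_pos' (fun j _ => mul_nonneg (hp.1 j) (hc j).le)
    ⟨i, Finset.mem_univ i, mul_pos hi (hc i)⟩

variable {C : ι → κ → ℝ} {c : κ → ℝ}

theorem iInf_sum_mul_div_le_iSup (hc : ∀ j, 0 < c j) {p : κ → ℝ} {π : ι → ℝ}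
    (hp : p ∈ stdSimplex ℝ κ) (hπ : π ∈ stdSimplex ℝ ι) :
    (⨅ i, ∑ j, p j * C i j) / ∑ j, p j * c j ≤ ⨆ j, (∑ i, π i * C i j) / c j := by
  rw [div_le_iff₀ (sum_mul_pos_of_mem_stdSimplex hp hc)]
  calc ⨅ i, ∑ j, p j * C i j
      ≤ ∑ i, π i * ∑ j, p j * C i j := ciInf_le_sum_mul_of_mem_stdSimplex hπ _
    _ = ∑ j, p j * ∑ i, π i * C i j := by
      simp only [Finset.mul_sum]
      rw [Finset.sum_comm]
      exact Finset.sum_congr rfl fun j _ => Finset.sum_congr rfl fun i _ => by ring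
    _ = ∑ j, p j * c j * ((∑ i, π i * C i j) / c j) :=
      Finset.sum_congr rfl fun j _ => by field_simp [(hc j).ne']
    _ ≤ ∑ j, p j * c j * ⨆ j, (∑ i, π i * C i j) / c j := Finset.sum_le_sum fun j _ =>
      mul_le_mul_of_nonneg_left
        (le_ciSup (f := fun j => (∑ i, π i * C i j) / c j) (Finite.bddAbove_range _) j)
        (mul_nonneg (hp.1 j) (hc j).le)
    _ = (⨆ j, (∑ i, π i * C i j) / c j) * ∑ j, p j * c j := by
      rw [← Finset.sum_mul, mul_comm]

theorem exists_mem_stdSimplex_forall_sum_mul_div_le [Nonempty ι] [Nonempty κ]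
    (hc : ∀ j, 0 < c j) {V : ℝ}
    (hV : ∀ p ∈ stdSimplex ℝ κ, (⨅ i, ∑ j, p j * C i j) / ∑ j, p j * c j ≤ V) :
    ∃ π ∈ stdSimplex ℝ ι, ∀ j, (∑ i, π i * C i j) / c j ≤ V := by
  -- shifting the payoff by `V * c` turns the bound on the ratio into a sign condition
  obtain ⟨π, hπ, hπC⟩ :=
    exists_mem_stdSimplex_forall_sum_mul_nonpos (fun i j => C i j - V * c j) fun q hq => by
      obtain ⟨i, hi⟩ := exists_eq_ciInf_of_finite (f := fun i => ∑ j, q j * C i j)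
      have := hV q hq
      rw [div_le_iff₀ (sum_mul_pos_of_mem_stdSimplex hq hc), ← hi] at this
      refine ⟨i, ?_⟩
      simp only [mul_sub, Finset.sum_sub_distrib]
      linarith [show ∑ j, q j * (V * c j) = V * ∑ j, q j * c j by
        rw [Finset.mul_sum]; exact Finset.sum_congr rfl fun j _ => by ring]
  refine ⟨π, hπ, fun j => ?_⟩
  have := hπC j
  simp only [mul_sub, Finset.sum_sub_distrib, ← Finset.sum_mul, hπ.2] at this
  rw [div_le_iff₀ (hc j)]
  linarith

theorem ratio_game_minimax [Nonempty ι] [Nonempty κ] (C : ι → κ → ℝ) (c : κ → ℝ)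
    (hc : ∀ j, 0 < c j) :
    ⨆ p : stdSimplex ℝ κ, (⨅ i, ∑ j, p.1 j * C i j) / ∑ j, p.1 j * c j
      = ⨅ π : stdSimplex ℝ ι, ⨆ j, (∑ i, π.1 i * C i j) / c j := by
  classical
  have weak (p : stdSimplex ℝ κ) (π : stdSimplex ℝ ι) :=
    iInf_sum_mul_div_le_iSup (C := C) hc p.2 π.2
  have p₀ : stdSimplex ℝ κ := ⟨_, single_mem_stdSimplex ℝ (Classical.arbitrary κ)⟩
  have π₀ : stdSimplex ℝ ι := ⟨_, single_mem_stdSimplex ℝ (Classical.arbitrary ι)⟩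
  refine le_antisymm (ciSup_le fun p => le_ciInf fun π => weak p π) ?_
  obtain ⟨π, hπ, hπV⟩ := exists_mem_stdSimplex_forall_sum_mul_div_le hc fun p hp =>
    le_ciSup ⟨_, forall_mem_range.2 fun p => weak p π₀⟩ (⟨p, hp⟩ : stdSimplex ℝ κ)
  exact ciInf_le_of_le ⟨_, forall_mem_range.2 (weak p₀)⟩ ⟨π, hπ⟩ (ciSup_le hπV)

end

theorem stmt6_general {Γ : Type*} [Fintype Γ] [Nonempty Γ] (n : ℕ) (hn : 0 < n)
    (C : Γ → Fin n → ℝ) :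
    (⨆ p : {p : Fin n → ℝ // (∀ T, 0 ≤ p T) ∧ ∑ T, p T = 1},
        (⨅ I : Γ, ∑ T, p.1 T * C I T) / (∑ T, p.1 T * ((T : ℝ) + 1)))
      = ⨅ π : {π : Γ → ℝ // (∀ I, 0 ≤ π I) ∧ ∑ I, π I = 1},
          ⨆ T : Fin n, (∑ I, π.1 I * C I T) / ((T : ℝ) + 1) := by
  have : Nonempty (Fin n) := ⟨⟨0, hn⟩⟩
  exact ratio_game_minimax C (fun T => (T : ℝ) + 1) fun T => by positivity

/-- LP-duality/minimax lemma: for a nonnegative cost matrix C on Γ × [n] (Γ finite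
nonempty, elements T of [n] = {1,…,n} encoded as Fin n with value T+1),
  max_{p ∈ Δ([n])} (min_{I∈Γ} Σ_T p(T)·C(I,T)) / (Σ_T p(T)·T)
    = min_{π ∈ Δ(Γ)} max_{T∈[n]} (Σ_I π(I)·C(I,T)) / T. -/
theorem stmt6 {Γ : Type*} [Fintype Γ] [Nonempty Γ] (n : ℕ) (hn : 0 < n)
    (C : Γ → Fin n → ℝ) (hC : ∀ I T, 0 ≤ C I T) :
    (⨆ p : {p : Fin n → ℝ // (∀ T, 0 ≤ p T) ∧ ∑ T, p T = 1},
        (⨅ I : Γ, ∑ T, p.1 T * C I T) / (∑ T, p.1 T * ((T : ℝ) + 1)))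
      = ⨅ π : {π : Γ → ℝ // (∀ I, 0 ≤ π I) ∧ ∑ I, π I = 1},
          ⨆ T : Fin n, (∑ I, π.1 I * C I T) / ((T : ℝ) + 1) :=
  stmt6_general n hn C
end

section
/- In the deterministic knapsack cover instance with target k = 2^ℓ and items consisting of, for each i ∈ {0,...,ℓ}, one item of cost 2^i and reward 2^i together with ℓ−1 items of cost 2^i and reward 1, the optimal cost is exactly 2^ℓ (achieved by taking the single item of cost and reward 2^ℓ). -/
/-- Deterministic knapsack cover instance with target k = 2^ℓ: items indexed by
(i, j) ∈ {0,…,ℓ} × {0,…,ℓ-1}, where item (i, j) has cost 2^i, and reward 2^i if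
j = 0 (one such item per i) and reward 1 otherwise (ℓ-1 such items per i).
The optimal cost is exactly 2^ℓ. -/
theorem stmt8 (ℓ : ℕ) (hℓ : 1 ≤ ℓ) :
    IsLeast {c : ℕ | ∃ S : Finset (Fin (ℓ + 1) × Fin ℓ),
        2 ^ ℓ ≤ (∑ x ∈ S, if (x.2 : ℕ) = 0 then 2 ^ (x.1 : ℕ) else 1) ∧
        c = ∑ x ∈ S, 2 ^ (x.1 : ℕ)}
      (2 ^ ℓ) := by
  refine ⟨⟨{(Fin.last ℓ, ⟨0, hℓ⟩)}, by simp, by simp⟩, ?_⟩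
  rintro c ⟨S, hS, rfl⟩
  -- every item's reward is at most its cost
  refine hS.trans (Finset.sum_le_sum fun x _ => ?_)
  split_ifs
  exacts [le_rfl, Nat.one_le_two_pow]
end

section
/- In the stochastic covering knapsack instance with target k = 2^{n+1}, a zero-cost random item r taking reward k − 2^i with probability p_i (for i ∈ [n], Σ p_i = 1), and deterministic items u_1,...,u_n where u_i has cost i and reward 2^i, the optimal adaptive policy has expected cost exactly Σ_{i=1}^n i·p_i. -/
/-!
Covering a residual target `2^i` with deterministic items of rewards `2^j` requires some item
with `j ≥ i`, since the distinct powers `2^j` with `j < i` sum to less than `2^i`; that item alone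
costs at least `i`. So after observing the random item, the cheapest completion is the single
item `u_i`, and averaging over the outcomes gives the optimal expected cost `∑ i * p_i`.
-/

open Finset

lemma Nat.exists_le_of_pow_le_sum_pow {ι : Type*} {b m : ℕ} {s : Finset ι} {f : ι → ℕ}
    (hb : 2 ≤ b) (hf : Set.InjOn f s) (h : b ^ m ≤ ∑ j ∈ s, b ^ f j) : ∃ j ∈ s, m ≤ f j := by
  by_contra! hs
  rw [← sum_image hf] at h
  exact (Nat.geomSum_lt hb (by simpa using hs)).not_ge h

lemma cost_le_of_covers {n : ℕ} {i : Fin n} {S : Finset (Fin n)}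
    (h : 2 ^ ((i : ℕ) + 1) ≤ ∑ j ∈ S, 2 ^ ((j : ℕ) + 1)) :
    ((i : ℕ) + 1 : ℝ) ≤ ∑ j ∈ S, ((j : ℕ) + 1 : ℝ) := by
  obtain ⟨j, hjS, hij⟩ := Nat.exists_le_of_pow_le_sum_pow le_rfl
    (fun a _ b _ hab => Fin.ext (Nat.succ_injective hab)) h
  calc ((i : ℕ) + 1 : ℝ) ≤ (j : ℕ) + 1 := by exact_mod_cast hij
    _ ≤ ∑ j ∈ S, ((j : ℕ) + 1 : ℝ) :=
      single_le_sum (f := fun j : Fin n => ((j : ℕ) + 1 : ℝ)) (fun _ _ => by positivity) hjS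

-- Outcome `i : Fin n` of the random item stands for index `i + 1 ∈ [n]` of the paper.
theorem stmt14_general (n : ℕ) (p : Fin n → ℝ)
    (hp : ∀ i, 0 ≤ p i) :
    IsLeast {c : ℝ | ∃ S : Fin n → Finset (Fin n),
        (∀ i : Fin n, (2 : ℕ) ^ ((i : ℕ) + 1) ≤ ∑ j ∈ S i, 2 ^ ((j : ℕ) + 1)) ∧
        c = ∑ i, p i * ∑ j ∈ S i, ((j : ℕ) + 1 : ℝ)}
      (∑ i, p i * ((i : ℕ) + 1 : ℝ)) := by
  constructor
  · exact ⟨fun i => {i}, fun i => by simp, by simp⟩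
  · rintro c ⟨S, hcovers, rfl⟩
    exact sum_le_sum fun i _ => mul_le_mul_of_nonneg_left (cost_le_of_covers (hcovers i)) (hp i)

/-- Adaptivity-gap instance: target k = 2^{n+1}; the zero-cost random item r takes
reward k - 2^{i+1} with probability p_{i+1} (i : Fin n encodes index i+1 ∈ [n]);
deterministic item u_{j+1} has cost j+1 and reward 2^{j+1}. An adaptive policy first
takes r and then, having observed outcome i (residual target 2^{i+1}), chooses a set
S i of deterministic items covering the residual. The optimal adaptive expected cost
is exactly Σ_{i=1}^n i·p_i. -/
theorem stmt14 (n : ℕ) (hn : 0 < n) (p : Fin n → ℝ)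
    (hp : ∀ i, 0 ≤ p i) (hp1 : ∑ i, p i = 1) :
    IsLeast {c : ℝ | ∃ S : Fin n → Finset (Fin n),
        (∀ i : Fin n, (2 : ℕ) ^ ((i : ℕ) + 1) ≤ ∑ j ∈ S i, 2 ^ ((j : ℕ) + 1)) ∧
        c = ∑ i, p i * ∑ j ∈ S i, ((j : ℕ) + 1 : ℝ)}
      (∑ i, p i * ((i : ℕ) + 1 : ℝ)) :=
  stmt14_general n p hp
end

section
/- For the sequences in the non-adaptive algorithm analysis: if u_i ≤ u_{i-1}/4 + u*_i for all i ≥ 1, u*_0 = 1, the algorithm's expected length satisfies ALG ≤ 2ℓα·Σ_{i≥1} 2^i u_i + 4ℓα, and OPT ≥ (1/2)·Σ_{i≥1} 2^i u*_i + 1, then ALG ≤ 8ℓα·OPT. -/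
/-!
Weighting the recurrence `u (i+1) ≤ u i / 4 + v (i+1)` by `2 ^ (i+1)` and summing gives
`T ≤ (u 0 + T) / 2 + S` for `T = ∑ 2^(i+1) u (i+1)` and `S = ∑ 2^(i+1) v (i+1)`, so
`T ≤ u 0 + 2 S ≤ 4 OPT - 3`; substituting into the bound on `ALG` leaves a margin of `2ℓα`.
-/

theorem one_sub_mul_tsum_pow_mul_le {u v : ℕ → ℝ} {r c : ℝ} (hr : 0 ≤ r)
    (hrec : ∀ i, u (i + 1) ≤ c * u i + v (i + 1))
    (hu : Summable fun i => r ^ (i + 1) * u (i + 1))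
    (hv : Summable fun i => r ^ (i + 1) * v (i + 1)) :
    (1 - r * c) * ∑' i, r ^ (i + 1) * u (i + 1)
      ≤ r * c * u 0 + ∑' i, r ^ (i + 1) * v (i + 1) := by
  have hu' : Summable fun i => r ^ i * u i := (summable_nat_add_iff 1).mp hu
  have hstep : ∀ i, r ^ (i + 1) * u (i + 1) ≤ r * c * (r ^ i * u i) + r ^ (i + 1) * v (i + 1) :=
    fun i => calc
      r ^ (i + 1) * u (i + 1) ≤ r ^ (i + 1) * (c * u i + v (i + 1)) :=
        mul_le_mul_of_nonneg_left (hrec i) (pow_nonneg hr _)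
      _ = r * c * (r ^ i * u i) + r ^ (i + 1) * v (i + 1) := by ring
  have hsum := Summable.tsum_le_tsum hstep hu ((hu'.mul_left (r * c)).add hv)
  rw [(hu'.mul_left (r * c)).tsum_add hv, tsum_mul_left, hu'.tsum_eq_zero_add] at hsum
  simp only [pow_zero, one_mul] at hsum
  linarith

theorem stmt18_general (u v : ℕ → ℝ)
    (hrec : ∀ i, u (i + 1) ≤ u i / 4 + v (i + 1)) (hu0 : u 0 ≤ 1)
    (hT : Summable (fun i => (2 : ℝ) ^ (i + 1) * u (i + 1)))
    (hS : Summable (fun i => (2 : ℝ) ^ (i + 1) * v (i + 1)))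
    (ℓ α ALG OPT : ℝ) (hℓ : 0 < ℓ) (hα : 0 < α)
    (hALG : ALG ≤ 2 * ℓ * α * (∑' i, (2 : ℝ) ^ (i + 1) * u (i + 1)) + 4 * ℓ * α)
    (hOPT : (1 / 2) * (∑' i, (2 : ℝ) ^ (i + 1) * v (i + 1)) + 1 ≤ OPT) :
    ALG ≤ 8 * ℓ * α * OPT := by
  have hsum := one_sub_mul_tsum_pow_mul_le (c := 1 / 4) zero_le_two
    (fun i => by linarith [hrec i]) hT hS
  have hT_le : ∑' i, (2 : ℝ) ^ (i + 1) * u (i + 1) ≤ 4 * OPT - 3 := by linarith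
  have hℓα : 0 ≤ 2 * ℓ * α := by positivity
  linarith [mul_le_mul_of_nonneg_left hT_le hℓα]

/-- Non-adaptive analysis wrap-up: if u_i ≤ u_{i-1}/4 + u*_i for i ≥ 1, u*_0 = 1,
u_0 ≤ 1 (the u_i are probabilities), ALG ≤ 2ℓα·Σ_{i≥1} 2^i u_i + 4ℓα, and
OPT ≥ (1/2)·Σ_{i≥1} 2^i u*_i + 1, then ALG ≤ 8ℓα·OPT. -/
theorem stmt18 (u v : ℕ → ℝ) (hu : ∀ i, 0 ≤ u i) (hv : ∀ i, 0 ≤ v i)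
    (hrec : ∀ i, u (i + 1) ≤ u i / 4 + v (i + 1)) (hv0 : v 0 = 1) (hu0 : u 0 ≤ 1)
    (hT : Summable (fun i => (2 : ℝ) ^ (i + 1) * u (i + 1)))
    (hS : Summable (fun i => (2 : ℝ) ^ (i + 1) * v (i + 1)))
    (ℓ α ALG OPT : ℝ) (hℓ : 0 < ℓ) (hα : 0 < α)
    (hALG : ALG ≤ 2 * ℓ * α * (∑' i, (2 : ℝ) ^ (i + 1) * u (i + 1)) + 4 * ℓ * α)
    (hOPT : (1 / 2) * (∑' i, (2 : ℝ) ^ (i + 1) * v (i + 1)) + 1 ≤ OPT) :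
    ALG ≤ 8 * ℓ * α * OPT :=
  stmt18_general u v hrec hu0 hT hS ℓ α ALG OPT hℓ hα hALG hOPT
end
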